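/- arXiv:1403.6624 — 6 statements merged into one kernel-verified Lean document; each statement's English description precedes it below -/
import Mathlib

section
/- Let f : ℝⁿ → ℝ be a polynomial function. Define Z = {(x,a) ∈ ℝⁿ × ℝⁿ : x is a critical point of the map (f, ρ_a) : ℝⁿ → ℝ² and x is not a critical point of f}, where ρ_a(x) = ‖x - a‖². Then Z is a smooth submanifold of ℝⁿ × ℝⁿ of dimension n+1. -/
open Filter Topology MvPolynomial Set

noncomputable section

/-- The polynomial function `ℝⁿ → ℝ` associated to `P`. -/
def fe (n : ℕ) (P : MvPolynomial (Fin n) ℝ) (x : EuclideanSpace ℝ (Fin n)) : ℝ :=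
  MvPolynomial.eval (fun j => x j) P

/-- The set `Z = {(x,a) : x ∈ M_a(f) \ Sing f}`: `x` is a critical point of `(f, ρ_a)`
(i.e. `grad f(x)` and `x - a` are linearly dependent) but not a critical point of `f`. -/
def Zset (n : ℕ) (P : MvPolynomial (Fin n) ℝ) :
    Set (EuclideanSpace ℝ (Fin n) × EuclideanSpace ℝ (Fin n)) :=
  {za | gradient (fe n P) za.1 ≠ 0 ∧
        ¬ LinearIndependent ℝ ![gradient (fe n P) za.1, za.1 - za.2]}

lemma contDiff_fe (n : ℕ) (P : MvPolynomial (Fin n) ℝ) : ContDiff ℝ (⊤ : ℕ∞) (fe n P) := by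
  induction P using MvPolynomial.induction_on with
  | C a =>
    have : fe n (C a) = fun _ => a := by funext x; simp [fe]
    rw [this]; exact contDiff_const
  | add p q hp hq =>
    have : fe n (p + q) = fun x => fe n p x + fe n q x := by funext x; simp [fe]
    rw [this]; exact hp.add hq
  | mul_X p j hp =>
    have : fe n (p * X j) = fun x => fe n p x * x j := by funext x; simp [fe]
    rw [this]; exact hp.mul (EuclideanSpace.proj j : EuclideanSpace ℝ (Fin n) →L[ℝ] ℝ).contDiff

lemma contDiff_grad (n : ℕ) (P : MvPolynomial (Fin n) ℝ) :
    ContDiff ℝ (⊤ : ℕ∞) (gradient (fe n P)) := by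
  have h : ContDiff ℝ (⊤ : ℕ∞) (fderiv ℝ (fe n P)) :=
    (contDiff_fe n P).fderiv_right (by simp)
  exact (InnerProductSpace.toDual ℝ
    (EuclideanSpace ℝ (Fin n))).symm.contDiff.comp h

/-- `Z` is a smooth submanifold of `ℝⁿ × ℝⁿ` of dimension `n + 1`, expressed as: near each
of its points, `Z` is the zero set of a smooth submersion into `ℝ^{n-1}` (codimension
`2n - (n+1) = n - 1`). -/
theorem Zset_isSubmanifold (n : ℕ) (P : MvPolynomial (Fin n) ℝ) :
    ∀ z ∈ Zset n P,
      ∃ (U : Set (EuclideanSpace ℝ (Fin n) × EuclideanSpace ℝ (Fin n)))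
        (g : EuclideanSpace ℝ (Fin n) × EuclideanSpace ℝ (Fin n) →
          EuclideanSpace ℝ (Fin (n - 1))),
        IsOpen U ∧ z ∈ U ∧ ContDiff ℝ (⊤ : ℕ∞) g ∧
        (∀ w ∈ U, Function.Surjective (fderiv ℝ g w)) ∧
        Zset n P ∩ U = {w ∈ U | g w = 0} := by
  cases n with
  | zero =>
    intro z hz
    exact absurd (Subsingleton.elim _ _) hz.1
  | succ m =>
    set E := EuclideanSpace ℝ (Fin (m + 1))
    set G : E → E := gradient (fe (m + 1) P) with hGdef
    have hGsmooth : ContDiff ℝ (⊤ : ℕ∞) G := contDiff_grad (m + 1) P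
    intro z hz
    obtain ⟨hg0, hdep⟩ := hz
    -- pick a coordinate where the gradient is nonzero
    have : ∃ i, G z.1 i ≠ 0 := by
      by_contra h
      push_neg at h
      exact hg0 (PiLp.ext fun k => by simpa using h k)
    obtain ⟨i, hi⟩ := this
    set U : Set (E × E) := {w | G w.1 i ≠ 0} with hUdef
    set g' : E × E → (Fin m → ℝ) := fun w j =>
      (w.1 (i.succAbove j) - w.2 (i.succAbove j)) * G w.1 i -
        (w.1 i - w.2 i) * G w.1 (i.succAbove j) with hg'def
    set g : E × E → EuclideanSpace ℝ (Fin m) := fun w =>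
      (EuclideanSpace.equiv (Fin m) ℝ).symm (g' w) with hgdef
    have hcontGi : Continuous fun w : E × E => G w.1 i :=
      (EuclideanSpace.proj i).continuous.comp
        (hGsmooth.continuous.comp continuous_fst)
    have hUopen : IsOpen U := isOpen_compl_singleton.preimage hcontGi
    -- smoothness of g
    have hcoord : ∀ k : Fin (m + 1), ContDiff ℝ (⊤ : ℕ∞) fun w : E × E => w.1 k - w.2 k :=
      fun k => (((EuclideanSpace.proj k : E →L[ℝ] ℝ).contDiff).comp contDiff_fst).sub
        (((EuclideanSpace.proj k : E →L[ℝ] ℝ).contDiff).comp contDiff_snd)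
    have hGcoord : ∀ k : Fin (m + 1), ContDiff ℝ (⊤ : ℕ∞) fun w : E × E => G w.1 k :=
      fun k => ((EuclideanSpace.proj k : E →L[ℝ] ℝ).contDiff).comp (hGsmooth.comp contDiff_fst)
    have hg'smooth : ContDiff ℝ (⊤ : ℕ∞) g' := by
      rw [contDiff_pi]
      intro j
      exact ((hcoord (i.succAbove j)).mul (hGcoord i)).sub
        ((hcoord i).mul (hGcoord (i.succAbove j)))
    have hgsmooth : ContDiff ℝ (⊤ : ℕ∞) g :=
      ((EuclideanSpace.equiv (Fin m) ℝ).symm.contDiff).comp hg'smooth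
    refine ⟨U, g, hUopen, hi, hgsmooth, ?_, ?_⟩
    · -- surjectivity of the differential on U
      intro w hw
      set x := w.1 with hx
      set c : E := G w.1 with hc
      have hci : c i ≠ 0 := hw
      -- the derivative in the `a`-direction
      set T : E →L[ℝ] EuclideanSpace ℝ (Fin m) :=
        ((EuclideanSpace.equiv (Fin m) ℝ).symm :
            (Fin m → ℝ) →L[ℝ] EuclideanSpace ℝ (Fin m)).comp
          (ContinuousLinearMap.pi fun j =>
            c (i.succAbove j) • EuclideanSpace.proj i -
              c i • EuclideanSpace.proj (i.succAbove j)) with hT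
      have key : (fun a : E => g (x, a)) = fun a => g (x, 0) + T a := by
        funext a
        apply (EuclideanSpace.equiv (Fin m) ℝ).injective
        funext j
        show g' (x, a) j = g' (x, 0) j + T a j
        have hTa : T a j = c (i.succAbove j) * a i - c i * a (i.succAbove j) := rfl
        have h0 : ∀ k : Fin (m + 1), (0 : E) k = 0 := fun _ => rfl
        simp only [hg'def, hTa, hc, hx, h0]
        ring
      have hfdT : HasFDerivAt (fun a : E => g (x, a)) T w.2 := by
        rw [key]
        have := (hasFDerivAt_const (g (x, 0)) w.2).add T.hasFDerivAt
        rw [zero_add] at this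
        exact this
      have hdg : DifferentiableAt ℝ g w := (hgsmooth.differentiable (by simp)).differentiableAt
      have hinr : HasFDerivAt (fun a : E => ((x, a) : E × E))
          (ContinuousLinearMap.inr ℝ E E) w.2 :=
        (hasFDerivAt_const _ _).prodMk (hasFDerivAt_id _)
      have hcomp : HasFDerivAt (fun a : E => g (x, a))
          ((fderiv ℝ g w).comp (ContinuousLinearMap.inr ℝ E E)) w.2 := by
        have := hdg.hasFDerivAt.comp w.2 hinr
        exact this
      have hTeq : T = (fderiv ℝ g w).comp (ContinuousLinearMap.inr ℝ E E) :=
        hfdT.unique hcomp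
      intro v
      -- build a preimage for `T`
      set δ : E := WithLp.toLp 2 (i.insertNth 0 fun j => -(v j) / c i : Fin (m + 1) → ℝ) with hδ
      have hδi : δ i = 0 := Fin.insertNth_apply_same (α := fun _ => ℝ) i 0 (fun j => -(v j) / c i)
      have hδs : ∀ j, δ (i.succAbove j) = -(v j) / c i :=
        fun j => Fin.insertNth_apply_succAbove (α := fun _ => ℝ) i 0 (fun j => -(v j) / c i) j
      have hTδ : T δ = v := by
        apply (EuclideanSpace.equiv (Fin m) ℝ).injective
        funext j
        show c (i.succAbove j) * δ i - c i * δ (i.succAbove j) = v j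
        rw [hδi, hδs]
        field_simp
        ring
      refine ⟨(0, δ), ?_⟩
      have h0 : (ContinuousLinearMap.inr ℝ E E) δ = (0, δ) :=
        ContinuousLinearMap.inr_apply δ
      rw [← h0, ← ContinuousLinearMap.comp_apply, ← hTeq]
      exact hTδ
    · -- the set equality
      ext w
      simp only [mem_inter_iff, mem_setOf_eq, Zset]
      constructor
      · rintro ⟨⟨hg0', hdep'⟩, hUw⟩
        refine ⟨hUw, ?_⟩
        rw [LinearIndependent.pair_iff' hg0'] at hdep'
        push_neg at hdep'
        obtain ⟨t, ht⟩ := hdep'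
        apply (EuclideanSpace.equiv (Fin m) ℝ).symm.injective.eq_iff.mpr
        funext j
        show g' w j = 0
        have h1 : w.1 (i.succAbove j) - w.2 (i.succAbove j) = t * G w.1 (i.succAbove j) := by
          have := congrArg (fun v : E => v (i.succAbove j)) ht
          simpa [PiLp.sub_apply, PiLp.smul_apply, smul_eq_mul] using this.symm
        have h2 : w.1 i - w.2 i = t * G w.1 i := by
          have := congrArg (fun v : E => v i) ht
          simpa [PiLp.sub_apply, PiLp.smul_apply, smul_eq_mul] using this.symm
        simp only [hg'def, h1, h2]
        ring
      · rintro ⟨hUw, hgw⟩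
        have hg0' : G w.1 ≠ 0 := fun h => hUw (by rw [hGdef] at h ⊢; rw [h]; rfl)
        refine ⟨⟨hg0', ?_⟩, hUw⟩
        rw [LinearIndependent.pair_iff' hg0']
        push_neg
        have hgw' : ∀ j, g' w j = 0 := by
          intro j
          have : g' w = 0 := by
            apply (EuclideanSpace.equiv (Fin m) ℝ).symm.injective
            rw [map_zero]
            exact hgw
          exact congrFun this j
        refine ⟨(w.1 i - w.2 i) / G w.1 i, ?_⟩
        refine PiLp.ext fun k => ?_
        show ((w.1 i - w.2 i) / G w.1 i * G w.1 k) = (w.1 - w.2) k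
        rw [PiLp.sub_apply]
        have hci : G w.1 i ≠ 0 := hUw
        rcases eq_or_ne k i with rfl | hk
        · rw [div_mul_cancel₀ _ hci]
        · obtain ⟨j, rfl⟩ := Fin.exists_succAbove_eq (Ne.symm hk).symm
          have h := hgw' j
          simp only [hg'def] at h
          field_simp
          linarith [h]
end
end

section
/- For any a ∈ ℝⁿ and polynomial mapping f : ℝⁿ → ℝ^p, the set S_a(f) of asymptotic ρ_a-nonregular values is a closed subset of ℝ^p. -/
open Filter Topology MvPolynomial Set

noncomputable section

/-- The polynomial mapping `ℝⁿ → ℝᵖ` associated to a family of polynomials. -/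
def Fmap (n p : ℕ) (f : Fin p → MvPolynomial (Fin n) ℝ) (x : EuclideanSpace ℝ (Fin n)) :
    EuclideanSpace ℝ (Fin p) := WithLp.toLp 2 (fun i => MvPolynomial.eval (fun j => x j) (f i))

/-- The Milnor set `M_a(f)`: the critical set of `(f, ρ_a)`, `ρ_a(x) = ‖x - a‖²`. -/
def MilnorP (n p : ℕ) (f : Fin p → MvPolynomial (Fin n) ℝ) (a : EuclideanSpace ℝ (Fin n)) :
    Set (EuclideanSpace ℝ (Fin n)) :=
  {x | ¬ Function.Surjective (fderiv ℝ (fun y => (Fmap n p f y, ‖y - a‖ ^ 2)) x)}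

/-- The Rabier function `ν(A) = inf_{‖ψ‖=1} ‖A* ψ‖`. -/
def nu (n p : ℕ) (A : EuclideanSpace ℝ (Fin n) →L[ℝ] EuclideanSpace ℝ (Fin p)) : ℝ :=
  sInf {r | ∃ ψ : EuclideanSpace ℝ (Fin p), ‖ψ‖ = 1 ∧ r = ‖ContinuousLinearMap.adjoint A ψ‖}

/-- `S_a(f)`: asymptotic `ρ_a`-nonregular values. -/
def SaSet (n p : ℕ) (f : Fin p → MvPolynomial (Fin n) ℝ) (a : EuclideanSpace ℝ (Fin n)) :
    Set (EuclideanSpace ℝ (Fin p)) :=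
  {c | ∃ x : ℕ → EuclideanSpace ℝ (Fin n), (∀ j, x j ∈ MilnorP n p f a) ∧
    Tendsto (fun j => ‖x j‖) atTop atTop ∧ Tendsto (fun j => Fmap n p f (x j)) atTop (𝓝 c)}

/-! Closedness of `S_a(f)` is purely topological: the values approached by `g` along sequences
tending to a countably generated filter are exactly the cluster points of `g` along that filter,
and a set of cluster points is always closed. Sequences in `M_a(f)` with `‖x‖ → ∞` are the
sequences tending to `comap ‖·‖ atTop` on the subtype `M_a(f)`. -/

section SequentialLimits

variable {X Y : Type*} [TopologicalSpace Y] [FirstCountableTopology Y]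

theorem setOf_exists_seq_tendsto_eq_setOf_mapClusterPt (l : Filter X) [l.IsCountablyGenerated]
    (g : X → Y) :
    {c | ∃ x : ℕ → X, Tendsto x atTop l ∧ Tendsto (g ∘ x) atTop (𝓝 c)} =
      {c | MapClusterPt c l g} := by
  ext c
  constructor
  · rintro ⟨x, hx, hgx⟩
    exact (mapClusterPt_comp.mp hgx.mapClusterPt).mono hx
  · intro hc
    obtain ⟨x, hgx, hx⟩ := hc.exists_seq_tendsto
    exact ⟨x, hx, hgx⟩

theorem isClosed_setOf_exists_seq_tendsto (l : Filter X) [l.IsCountablyGenerated] (g : X → Y) :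
    IsClosed {c | ∃ x : ℕ → X, Tendsto x atTop l ∧ Tendsto (g ∘ x) atTop (𝓝 c)} := by
  rw [setOf_exists_seq_tendsto_eq_setOf_mapClusterPt]
  exact isClosed_setOfPred_clusterPt

theorem isClosed_setOf_exists_seq_mem_tendsto_atTop (M : Set X) (φ : X → ℝ) (g : X → Y) :
    IsClosed {c | ∃ x : ℕ → X, (∀ j, x j ∈ M) ∧ Tendsto (φ ∘ x) atTop atTop ∧
      Tendsto (g ∘ x) atTop (𝓝 c)} := by
  convert isClosed_setOf_exists_seq_tendsto (atTop.comap (φ ∘ Subtype.val : M → ℝ))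
    (g ∘ Subtype.val) using 1
  ext c
  constructor
  · rintro ⟨x, hxM, hφx, hgx⟩
    exact ⟨fun j => ⟨x j, hxM j⟩, tendsto_comap_iff.mpr hφx, hgx⟩
  · rintro ⟨x, hφx, hgx⟩
    exact ⟨Subtype.val ∘ x, fun j => (x j).2, (tendsto_comap_iff (f := x)).mp hφx, hgx⟩

end SequentialLimits

theorem Sa_isClosed_general (n p : ℕ) (f : Fin p → MvPolynomial (Fin n) ℝ)
    (a : EuclideanSpace ℝ (Fin n)) : IsClosed (SaSet n p f a) :=
  isClosed_setOf_exists_seq_mem_tendsto_atTop (MilnorP n p f a) (‖·‖) (Fmap n p f)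

/-- For every `a ∈ ℝⁿ`, the set `S_a(f)` of asymptotic `ρ_a`-nonregular values is closed. -/
theorem Sa_isClosed (n p : ℕ) (hpn : p ≤ n) (f : Fin p → MvPolynomial (Fin n) ℝ)
    (a : EuclideanSpace ℝ (Fin n)) : IsClosed (SaSet n p f a) :=
  Sa_isClosed_general n p f a
end
end

section
/- Let g : ℝⁿ → ℝ be a polynomial of degree at most d, and let γ(t) = Σ_{i ≤ D} a_i t^i (a_i ∈ ℝⁿ, finite Laurent-type expansion convergent for |t| > R) be a real meromorphic arc with lim_{t→∞} g(γ(t)) = L ∈ ℝ. Let γ̂(t) = Σ_{-(d-1)D ≤ i ≤ D} a_i t^i be the truncation of γ at order -(d-1)D. Then lim_{t→∞} g(γ̂(t)) = L as well. -/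
open Filter Topology MvPolynomial Set

noncomputable section

/-!
Each coordinate of the arc has the form `γⱼ(t) = t ^ D * Pⱼ(t⁻¹)` with `Pⱼ` a polynomial, and
truncating at order `-(d-1)D` changes `Pⱼ` only by a multiple of `X ^ (dD + 1)`. For a monomial
`x ^ v` of `g`, `γ(t) ^ v - γ̂(t) ^ v = t ^ (D|v|) * (P ^ v - P̂ ^ v)(t⁻¹)`, and `P ^ v - P̂ ^ v` is
again divisible by `X ^ (dD + 1)`. Since `|v| ≤ d`, the difference is a polynomial in `t⁻¹`
without constant term, so it tends to `0`.
-/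

theorem Ideal.prod_pow_sub_prod_pow_mem {ι S : Type*} [CommRing S] {I : Ideal S} {x y : ι → S}
    (h : ∀ j, x j - y j ∈ I) (u : Finset ι) (v : ι → ℕ) :
    ∏ j ∈ u, x j ^ v j - ∏ j ∈ u, y j ^ v j ∈ I := by
  rw [← Ideal.Quotient.eq]
  simp only [map_prod, map_pow, Ideal.Quotient.eq.mpr (h _)]

namespace Polynomial

theorem tendsto_eval_inv_atTop_of_X_dvd {p : ℝ[X]} (hp : X ∣ p) :
    Tendsto (fun t : ℝ => p.eval t⁻¹) atTop (𝓝 0) := by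
  rw [X_dvd_iff, coeff_zero_eq_eval_zero] at hp
  have := (p.continuous.tendsto 0).comp (tendsto_inv_atTop_zero (𝕜 := ℝ))
  rwa [hp] at this

theorem tendsto_prod_sub_prod_of_X_pow_dvd {ι : Type*} (u : Finset ι) (v : ι → ℕ)
    {P Q : ι → ℝ[X]} {D N : ℕ} (hPQ : ∀ j, X ^ N ∣ P j - Q j) (hv : D * ∑ j ∈ u, v j < N) :
    Tendsto (fun t : ℝ => ∏ j ∈ u, (t ^ D * (P j).eval t⁻¹) ^ v j
      - ∏ j ∈ u, (t ^ D * (Q j).eval t⁻¹) ^ v j) atTop (𝓝 0) := by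
  set k := D * ∑ j ∈ u, v j
  obtain ⟨R, hR⟩ : X ^ N ∣ ∏ j ∈ u, P j ^ v j - ∏ j ∈ u, Q j ^ v j := by
    simp only [← Ideal.mem_span_singleton] at hPQ ⊢
    exact Ideal.prod_pow_sub_prod_pow_mem hPQ u v
  refine (tendsto_eval_inv_atTop_of_X_dvd
    ((dvd_pow_self X (Nat.sub_ne_zero_of_lt hv)).mul_right R)).congr' ?_
  filter_upwards [eventually_ne_atTop 0] with t ht
  have hfactor : ∏ j ∈ u, (t ^ D * (P j).eval t⁻¹) ^ v j - ∏ j ∈ u, (t ^ D * (Q j).eval t⁻¹) ^ v j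
      = t ^ k * (∏ j ∈ u, P j ^ v j - ∏ j ∈ u, Q j ^ v j).eval t⁻¹ := by
    simp only [mul_pow, Finset.prod_mul_distrib, ← pow_mul, Finset.prod_pow_eq_pow_sum,
      ← Finset.mul_sum, ← mul_sub, eval_sub, eval_prod, eval_pow, k]
  have hscale : t ^ k * t⁻¹ ^ N = t⁻¹ ^ (N - k) := by
    rw [pow_sub₀ _ (inv_ne_zero ht) hv.le, inv_pow t k, inv_inv, mul_comm]
  rw [hfactor, hR, eval_mul, eval_mul, eval_pow, eval_pow, eval_X, ← mul_assoc, hscale]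

def laurentReflect (D : ℕ) (s : Finset ℤ) (a : ℤ → ℝ) : ℝ[X] :=
  ∑ i ∈ s, C (a i) * X ^ (D - i).toNat

theorem sum_zpow_mul_eq_pow_mul_eval_laurentReflect {D : ℕ} {s : Finset ℤ}
    (hs : ∀ i ∈ s, i ≤ D) (a : ℤ → ℝ) {t : ℝ} (ht : t ≠ 0) :
    ∑ i ∈ s, t ^ i * a i = t ^ D * (laurentReflect D s a).eval t⁻¹ := by
  simp only [laurentReflect, eval_finsetSum, eval_mul, eval_C, eval_pow, eval_X, Finset.mul_sum]
  refine Finset.sum_congr rfl fun i hi => ?_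
  rw [mul_left_comm, mul_comm, ← zpow_natCast, ← zpow_natCast,
    Int.toNat_of_nonneg (by linarith [hs i hi]), inv_zpow', ← zpow_add₀ ht]
  ring_nf

theorem X_pow_dvd_laurentReflect_sub_filter (D : ℕ) (s : Finset ℤ) (a : ℤ → ℝ) {c : ℤ} {N : ℕ}
    (hN : N + c ≤ D + 1) :
    X ^ N ∣ laurentReflect D s a - laurentReflect D (s.filter (c ≤ ·)) a := by
  rw [laurentReflect, laurentReflect, ← Finset.sum_filter_add_sum_filter_not s (c ≤ ·),
    add_sub_cancel_left]
  refine Finset.dvd_sum fun i hi => (pow_dvd_pow X ?_).mul_left _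
  have := (Finset.mem_filter.mp hi).2
  omega

end Polynomial

open Polynomial in
theorem MvPolynomial.tendsto_eval_sub_eval_of_X_pow_dvd {σ : Type*} (g : MvPolynomial σ ℝ)
    {d D : ℕ} (hg : g.totalDegree ≤ d) {P Q : σ → ℝ[X]}
    (hPQ : ∀ j, Polynomial.X ^ (d * D + 1) ∣ P j - Q j) :
    Tendsto (fun t : ℝ => eval (fun j => t ^ D * (P j).eval t⁻¹) g
      - eval (fun j => t ^ D * (Q j).eval t⁻¹) g) atTop (𝓝 0) := by
  simp only [eval_eq, ← Finset.sum_sub_distrib, ← mul_sub]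
  rw [← Finset.sum_const_zero]
  refine tendsto_finsetSum _ fun v hv => ?_
  have hdeg : D * ∑ j ∈ v.support, v j < d * D + 1 := by
    have : ∑ j ∈ v.support, v j ≤ d := (le_totalDegree hv).trans hg
    nlinarith
  simpa using (tendsto_prod_sub_prod_of_X_pow_dvd v.support v hPQ hdeg).const_mul (g.coeff v)

theorem truncation_preserves_limit_general (n d D : ℕ)
    (g : MvPolynomial (Fin n) ℝ) (hg : g.totalDegree ≤ d)
    (s : Finset ℤ) (A : ℤ → EuclideanSpace ℝ (Fin n))
    (hs : ∀ i ∈ s, i ≤ (D : ℤ)) (L : ℝ)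
    (hlim : Tendsto
      (fun t : ℝ => MvPolynomial.eval (fun j => (∑ i ∈ s, t ^ i • A i) j) g)
      atTop (𝓝 L)) :
    Tendsto
      (fun t : ℝ => MvPolynomial.eval
        (fun j => (∑ i ∈ s.filter (fun i => -(((d : ℤ) - 1) * D) ≤ i), t ^ i • A i) j) g)
      atTop (𝓝 L) := by
  set c := -(((d : ℤ) - 1) * D)
  have harc : ∀ u ⊆ s, ∀ t ≠ (0 : ℝ), (fun j => (∑ i ∈ u, t ^ i • A i) j)
      = fun j => t ^ D * (Polynomial.laurentReflect D u (A · j)).eval t⁻¹ :=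
    fun u hu t ht => funext fun j => by
      simpa using Polynomial.sum_zpow_mul_eq_pow_mul_eval_laurentReflect
        (fun i hi => hs i (hu hi)) (A · j) ht
  have hdiff := g.tendsto_eval_sub_eval_of_X_pow_dvd hg fun j =>
    Polynomial.X_pow_dvd_laurentReflect_sub_filter D s (A · j) (c := c) (N := d * D + 1)
      (by simp only [c]; push_cast; linarith)
  rw [← sub_zero L]
  refine (hlim.sub hdiff).congr' ?_
  filter_upwards [eventually_ne_atTop 0] with t ht
  rw [harc s subset_rfl t ht, harc _ (Finset.filter_subset _ s) t ht, sub_sub_cancel]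

/-- Truncation lemma (Jelonek–Kurdyka, Lemma 3.3): if `g` has degree `≤ d` and
`γ(t) = Σ_{i ≤ D} aᵢ tⁱ` is a finite Laurent arc with `g(γ(t)) → L` as `t → ∞`,
then the truncation `γ̂` discarding all terms of order `< -(d-1)D` satisfies
`g(γ̂(t)) → L` as well. -/
theorem truncation_preserves_limit (n d D : ℕ) (hD : 0 < D)
    (g : MvPolynomial (Fin n) ℝ) (hg : g.totalDegree ≤ d)
    (s : Finset ℤ) (A : ℤ → EuclideanSpace ℝ (Fin n))
    (hs : ∀ i ∈ s, i ≤ (D : ℤ)) (L : ℝ)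
    (hlim : Tendsto
      (fun t : ℝ => MvPolynomial.eval (fun j => (∑ i ∈ s, t ^ i • A i) j) g)
      atTop (𝓝 L)) :
    Tendsto
      (fun t : ℝ => MvPolynomial.eval
        (fun j => (∑ i ∈ s.filter (fun i => -(((d : ℤ) - 1) * D) ≤ i), t ^ i • A i) j) g)
      atTop (𝓝 L) :=
  truncation_preserves_limit_general n d D g hg s A hs L hlim
end
end

section
/- Let f : ℝ² → ℝ be defined by f(x,y) = y(x²y² + 3xy + 3), and let M₀(f) be the Milnor set of f, i.e. the set of points (x,y) where grad f(x,y) and (x,y) are linearly dependent. Then S_{(0,0)}(f) = ∅. -/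
open Filter Topology Set

noncomputable section

/-- `f(x,y) = y(x²y² + 3xy + 3) = x²y³ + 3xy² + 3y`. -/
def fEx (p : EuclideanSpace ℝ (Fin 2)) : ℝ :=
  (p 0) ^ 2 * (p 1) ^ 3 + 3 * (p 0) * (p 1) ^ 2 + 3 * (p 1)

/-- The Milnor set `M_a(f)`: points where `grad f(p)` and `p - a` are linearly dependent. -/
def MilnorEx (a : EuclideanSpace ℝ (Fin 2)) : Set (EuclideanSpace ℝ (Fin 2)) :=
  {p | ¬ LinearIndependent ℝ ![gradient fEx p, p - a]}

/-- `S_a(f)`: finite limits of `f` along sequences in `M_a(f)` going to infinity in norm. -/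
def SaEx (a : EuclideanSpace ℝ (Fin 2)) : Set ℝ :=
  {c | ∃ x : ℕ → EuclideanSpace ℝ (Fin 2), (∀ j, x j ∈ MilnorEx a) ∧
    Tendsto (fun j => ‖x j‖) atTop atTop ∧ Tendsto (fun j => fEx (x j)) atTop (𝓝 c)}

/- ### Auxiliary lemmas -/

open InnerProductSpace

lemma hasFDerivAt_fEx (p : EuclideanSpace ℝ (Fin 2)) :
    HasFDerivAt fEx
      ((2*(p 0)*(p 1)^3 + 3*(p 1)^2) •
          (EuclideanSpace.proj 0 : EuclideanSpace ℝ (Fin 2) →L[ℝ] ℝ)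
        + (3*(p 0)^2*(p 1)^2 + 6*(p 0)*(p 1) + 3) •
          (EuclideanSpace.proj 1 : EuclideanSpace ℝ (Fin 2) →L[ℝ] ℝ)) p := by
  have h0 : HasFDerivAt (fun q : EuclideanSpace ℝ (Fin 2) => q 0)
      (EuclideanSpace.proj 0 : EuclideanSpace ℝ (Fin 2) →L[ℝ] ℝ) p :=
    (EuclideanSpace.proj (0 : Fin 2) : EuclideanSpace ℝ (Fin 2) →L[ℝ] ℝ).hasFDerivAt
  have h1 : HasFDerivAt (fun q : EuclideanSpace ℝ (Fin 2) => q 1)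
      (EuclideanSpace.proj 1 : EuclideanSpace ℝ (Fin 2) →L[ℝ] ℝ) p :=
    (EuclideanSpace.proj (1 : Fin 2) : EuclideanSpace ℝ (Fin 2) →L[ℝ] ℝ).hasFDerivAt
  have H := (((h0.mul h0).mul ((h1.mul h1).mul h1)).add
      ((h0.const_mul (3:ℝ)).mul (h1.mul h1))).add (h1.const_mul (3:ℝ))
  have hf : fEx = fun q : EuclideanSpace ℝ (Fin 2) =>
      ((q 0 * q 0) * ((q 1 * q 1) * q 1) + (3 * q 0) * (q 1 * q 1)) + 3 * q 1 := by
    funext q; simp [fEx]; ring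
  rw [hf]
  refine H.congr_fderiv ?_
  ext v
  simp
  ring

lemma gradient_fEx_apply (p : EuclideanSpace ℝ (Fin 2)) (i : Fin 2) :
    gradient fEx p i =
      ((2*(p 0)*(p 1)^3 + 3*(p 1)^2) •
          (EuclideanSpace.proj 0 : EuclideanSpace ℝ (Fin 2) →L[ℝ] ℝ)
        + (3*(p 0)^2*(p 1)^2 + 6*(p 0)*(p 1) + 3) •
          (EuclideanSpace.proj 1 : EuclideanSpace ℝ (Fin 2) →L[ℝ] ℝ))
        (EuclideanSpace.single i 1) := by
  have hd := (hasFDerivAt_fEx p).fderiv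
  have h1 : ⟪gradient fEx p, EuclideanSpace.single i 1⟫_ℝ
      = fderiv ℝ fEx p (EuclideanSpace.single i 1) := by
    rw [gradient]; exact InnerProductSpace.toDual_symm_apply
  rw [EuclideanSpace.inner_single_right] at h1
  simp at h1
  rw [h1, hd]

lemma gradient_fEx_0 (p : EuclideanSpace ℝ (Fin 2)) :
    gradient fEx p 0 = 2*(p 0)*(p 1)^3 + 3*(p 1)^2 := by
  rw [gradient_fEx_apply]; simp

lemma gradient_fEx_1 (p : EuclideanSpace ℝ (Fin 2)) :
    gradient fEx p 1 = 3*(p 0)^2*(p 1)^2 + 6*(p 0)*(p 1) + 3 := by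
  rw [gradient_fEx_apply]; simp

lemma milnor_eq {p : EuclideanSpace ℝ (Fin 2)} (hp : p ∈ MilnorEx 0) :
    (2*(p 0)*(p 1)^3 + 3*(p 1)^2) * (p 1)
      - (3*(p 0)^2*(p 1)^2 + 6*(p 0)*(p 1) + 3) * (p 0) = 0 := by
  have h := hp
  rw [MilnorEx, Set.mem_setOf_eq, linearIndependent_fin2] at h
  push_neg at h
  simp only [Matrix.cons_val_one, Matrix.head_cons, Matrix.cons_val_zero, sub_zero] at h
  rcases eq_or_ne p 0 with h0 | h0
  · have e0 : p 0 = 0 := by rw [h0]; rfl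
    have e1 : p 1 = 0 := by rw [h0]; rfl
    rw [e0, e1]; ring
  · obtain ⟨a, ha⟩ := h h0
    have ha0 : a * p 0 = gradient fEx p 0 := by rw [← ha]; rfl
    have ha1 : a * p 1 = gradient fEx p 1 := by rw [← ha]; rfl
    rw [gradient_fEx_0] at ha0
    rw [gradient_fEx_1] at ha1
    linear_combination (p 0) * ha1 - (p 1) * ha0

set_option maxHeartbeats 1600000 in
/-- The key quantitative properness estimate on the Milnor set. -/
lemma keyBound (x y C : ℝ)
    (hE : (2*x*y^3 + 3*y^2) * y - (3*x^2*y^2 + 6*x*y + 3) * x = 0)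
    (hC : |x^2*y^3 + 3*x*y^2 + 3*y| ≤ C) :
    |x| ≤ 16*(C+1)^3 ∧ |y| ≤ 2*C := by
  have hCnn : 0 ≤ C := le_trans (abs_nonneg _) hC
  -- bound on |y|
  have hq : (3:ℝ)/4 ≤ (x*y)^2 + 3*(x*y) + 3 := by nlinarith [sq_nonneg (x*y + 3/2)]
  have hf : x^2*y^3 + 3*x*y^2 + 3*y = y * ((x*y)^2 + 3*(x*y) + 3) := by ring
  rw [hf, abs_mul, abs_of_pos (by linarith : (0:ℝ) < (x*y)^2 + 3*(x*y) + 3)] at hC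
  have hyb : |y| ≤ 2*C := by nlinarith [abs_nonneg y]
  refine ⟨?_, hyb⟩
  by_cases hy : y = 0
  · subst hy
    have hx : x = 0 := by linarith [hE]
    rw [hx]; simp; positivity
  · obtain ⟨u, hu⟩ : ∃ u : ℝ, u = x*y := ⟨_, rfl⟩
    have hI : 3*u*(u+1)^2 = y^4*(2*u+3) := by rw [hu]; linear_combination (-y) * hE
    have hy4 : 0 < y^4 := by positivity
    have hyabs : 0 < |y| := abs_pos.mpr hy
    have hxyu : |x| * |y| = |u| := by rw [hu, abs_mul]
    rcases le_or_gt |u| 1 with hu1 | hu1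
    · -- small u: u ∈ (0,1]
      have hun : -1 ≤ u := by cases abs_le.mp hu1; linarith
      have hux : u ≤ 1 := by cases abs_le.mp hu1; linarith
      have hupos : 0 < u := by
        by_contra h
        push_neg at h
        nlinarith [mul_nonneg (neg_nonneg.mpr h) (sq_nonneg (u+1)),
          mul_pos hy4 (show (0:ℝ) < 2*u+3 by linarith)]
      have hu2y : u ≤ 2*y^4 := by nlinarith [sq_nonneg u, mul_pos hupos hupos]
      have h1 : |x| * |y| ≤ 2*y^4 := by rw [hxyu, abs_of_pos hupos]; exact hu2y
      have hy4e : y^4 = |y|^4 := by rw [← abs_pow]; rw [abs_of_nonneg (by positivity)]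
      have h2 : |x| ≤ 2*|y|^3 := by nlinarith [hyabs, h1, hy4e]
      have h3 : |y|^3 ≤ (2*C)^3 := by
        apply pow_le_pow_left₀ (abs_nonneg y) hyb
      nlinarith [hCnn]
    · -- big u
      have hu2 : u^2 ≤ 9*y^4 := by
        rcases lt_or_ge 1 u with hub | hub
        · -- u > 1
          nlinarith [hI, hy4, mul_pos hy4 (show (0:ℝ) < u by linarith),
            mul_pos (mul_pos (show (0:ℝ) < u by linarith) (show (0:ℝ) < u by linarith))
              (show (0:ℝ) < u by linarith)]
        · have hun : u < -1 := by
            rcases lt_abs.mp hu1 with h | h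
            · linarith
            · linarith
          rcases le_or_gt 0 (2*u+3) with h23 | h23
          · exfalso
            have hneg : u + 1 < 0 := by linarith
            have hsq : 0 < (u+1)^2 := by rw [pow_two]; exact mul_pos_of_neg_of_neg hneg hneg
            have hlhs : 3*u*(u+1)^2 < 0 := by
              have := mul_pos (show (0:ℝ) < -(3*u) by linarith) hsq
              nlinarith [this]
            have hrhs : 0 ≤ y^4*(2*u+3) := mul_nonneg hy4.le h23
            linarith [hI]
          · have hq25 : 0 < 25*u^2 + 51*u + 27 := by nlinarith [sq_nonneg (50*u + 51)]
            by_contra hcon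
            push_neg at hcon
            have hm := mul_lt_mul_of_neg_right hcon h23
            nlinarith [hm, hI, mul_pos (show (0:ℝ) < -u by linarith) hq25]
      have h1 : |x| * |y| ≤ 3*y^2 := by
        nlinarith [hxyu, sq_abs u, abs_nonneg u, mul_nonneg (abs_nonneg x) (abs_nonneg y),
          sq_nonneg y]
      have h2 : |x| ≤ 3*|y| := by nlinarith [hyabs, sq_abs y]
      nlinarith [hCnn, mul_nonneg hCnn hCnn, mul_nonneg (mul_nonneg hCnn hCnn) hCnn]

lemma norm_le_sum_abs (p : EuclideanSpace ℝ (Fin 2)) : ‖p‖ ≤ |p 0| + |p 1| := by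
  rw [EuclideanSpace.norm_eq]
  have h : Real.sqrt (∑ i, ‖p i‖^2) ≤ Real.sqrt ((|p 0| + |p 1|)^2) := by
    apply Real.sqrt_le_sqrt
    simp only [Fin.sum_univ_two, Real.norm_eq_abs]
    nlinarith [mul_nonneg (abs_nonneg (p 0)) (abs_nonneg (p 1)), sq_abs (p 0), sq_abs (p 1)]
  calc Real.sqrt (∑ i, ‖p i‖^2) ≤ Real.sqrt ((|p 0| + |p 1|)^2) := h
    _ = |p 0| + |p 1| := Real.sqrt_sq (by positivity)

/-- For `f(x,y) = y(x²y² + 3xy + 3)`, one has `S_{(0,0)}(f) = ∅`. -/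
theorem SaEx_origin_empty : SaEx (0 : EuclideanSpace ℝ (Fin 2)) = ∅ := by
  ext c
  simp only [Set.mem_empty_iff_false, iff_false]
  rintro ⟨x, hM, hnorm, hlim⟩
  have h1 : ∀ᶠ j in atTop, |fEx (x j)| ≤ |c| + 1 := by
    obtain ⟨N, hN⟩ := Metric.tendsto_atTop.mp hlim 1 one_pos
    filter_upwards [Filter.eventually_ge_atTop N] with j hj
    have := hN j hj
    rw [Real.dist_eq] at this
    calc |fEx (x j)| = |(fEx (x j) - c) + c| := by ring_nf
      _ ≤ |fEx (x j) - c| + |c| := abs_add_le _ _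
      _ ≤ |c| + 1 := by linarith
  have h2 : ∀ᶠ j in atTop, 20*((|c|+1)+1)^3 < ‖x j‖ :=
    hnorm.eventually_gt_atTop _
  obtain ⟨j, hj1, hj2⟩ := (h1.and h2).exists
  have hm := milnor_eq (hM j)
  have hb := keyBound (x j 0) (x j 1) (|c|+1) hm (by exact hj1)
  have hn := norm_le_sum_abs (x j)
  have hc0 : (0:ℝ) ≤ |c| + 1 := by positivity
  nlinarith [hb.1, hb.2, hn, hj2, mul_nonneg hc0 hc0, mul_nonneg (mul_nonneg hc0 hc0) hc0]
end
end

section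
/- Let f : ℝ² → ℝ, f(x,y) = y(x²y² + 3xy + 3). Then S_{(0,1)}(f) ≠ ∅, i.e., there exists t₀ ∈ ℝ and a sequence (p_j) in the Milnor set M_{(0,1)}(f) with ‖p_j‖ → ∞ and f(p_j) → t₀. In particular S_{(0,0)}(f) ≠ S_{(0,1)}(f), since S_{(0,0)}(f) = ∅. -/
/-!
On `M_{(0,0)}` the collinearity `f_x y = f_y x` reads, with `u = xy`, `y⁴(2u + 3) = 3u(u + 1)²`;
a sign discussion on `u` turns this into `x² ≤ 6y² + y⁶`. Since `f = y((u + 3/2)² + 3/4)` gives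
`|f| ≥ 3|y|/4`, `f` is proper on `M_{(0,0)}` and `S_{(0,0)}(f) = ∅`.

On `M_{(0,1)}` the collinearity reads `y³(2u + 3)(y - 1) = 3u(u + 1)²`, which for every
`0 < y ≤ 1/2` has a root `u ∈ [-1, -1/2]` by the intermediate value theorem. The points
`(u/y, y)` escape to infinity as `y → 0` while `f = y(u² + 3u + 3) → 0`, so `0 ∈ S_{(0,1)}(f)`.
-/

open Filter Topology Set

noncomputable section

theorem EuclideanSpace.linearIndependent_pair_iff {𝕜 : Type*} [RCLike 𝕜]
    (u v : EuclideanSpace 𝕜 (Fin 2)) :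
    LinearIndependent 𝕜 ![u, v] ↔ u 0 * v 1 - u 1 * v 0 ≠ 0 := by
  rw [LinearIndependent.pair_iff]
  constructor
  · intro h hdet
    obtain ⟨-, hu1⟩ := h (v 1) (-u 1) <| by
      ext k; fin_cases k <;> simp [mul_comm]
      linear_combination hdet
    obtain ⟨-, hu0⟩ := h (v 0) (-u 0) <| by
      ext k; fin_cases k <;> simp [mul_comm]
      linear_combination -hdet
    have hu : u = 0 := by
      ext k; fin_cases k
      exacts [by simpa using hu0, by simpa using hu1]
    simpa [hu] using h 1 0
  · intro hdet s t hst
    have h0 : s * u 0 + t * v 0 = 0 := by simpa using congrArg (· 0) hst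
    have h1 : s * u 1 + t * v 1 = 0 := by simpa using congrArg (· 1) hst
    constructor
    · refine (mul_eq_zero.mp ?_).resolve_right hdet
      linear_combination v 1 * h0 - v 0 * h1
    · refine (mul_eq_zero.mp ?_).resolve_right hdet
      linear_combination u 0 * h1 - u 1 * h0

theorem hasGradientAt_fEx (p : EuclideanSpace ℝ (Fin 2)) :
    HasGradientAt fEx !₂[2 * p 0 * p 1 ^ 3 + 3 * p 1 ^ 2, 3 * (p 0 * p 1 + 1) ^ 2] p := by
  have h0 := (EuclideanSpace.proj (𝕜 := ℝ) (0 : Fin 2)).hasFDerivAt (x := p)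
  have h1 := (EuclideanSpace.proj (𝕜 := ℝ) (1 : Fin 2)).hasFDerivAt (x := p)
  have hf := ((h0.pow 2).mul (h1.pow 3)).add ((h0.const_mul 3).mul (h1.pow 2)) |>.add
    (h1.const_mul 3)
  rw [hasGradientAt_iff_hasFDerivAt]
  refine hf.congr_fderiv ?_
  ext v
  simp only [Fin.isValue, PiLp.proj_apply, Nat.add_one_sub_one, nsmul_eq_mul, Nat.cast_ofNat,
    pow_one, add_apply, smul_apply, smul_eq_mul, InnerProductSpace.toDual_apply_apply,
    PiLp.inner_apply, RCLike.inner_apply, Real.ringHom_apply, Fin.sum_univ_two,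
    Matrix.cons_val_zero, Matrix.cons_val_one, Matrix.cons_val_fin_one]
  ring

theorem mem_MilnorEx_iff (a p : EuclideanSpace ℝ (Fin 2)) :
    p ∈ MilnorEx a ↔
      (2 * p 0 * p 1 ^ 3 + 3 * p 1 ^ 2) * (p 1 - a 1) = 3 * (p 0 * p 1 + 1) ^ 2 * (p 0 - a 0) := by
  simp [MilnorEx, EuclideanSpace.linearIndependent_pair_iff, (hasGradientAt_fEx p).gradient,
    sub_eq_zero]

theorem sq_le_of_milnor_zero_relation {x y : ℝ}
    (h : (2 * x * y ^ 3 + 3 * y ^ 2) * y = 3 * (x * y + 1) ^ 2 * x) :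
    x ^ 2 ≤ 6 * y ^ 2 + y ^ 6 := by
  set u := x * y
  have hyu : y ^ 4 * (2 * u + 3) = 3 * u * (u + 1) ^ 2 := by linear_combination y * h
  have hxy : x ^ 2 * y ^ 2 = u ^ 2 := by ring
  rcases lt_trichotomy u 0 with hneg | hzero | hpos
  · have hxu : u ^ 3 * (2 * u + 3) = 3 * x ^ 4 * (u + 1) ^ 2 := by linear_combination x ^ 3 * h
    have h23 : 2 * u + 3 ≤ 0 := by
      nlinarith [pow_pos (neg_pos.mpr hneg) 3,
        mul_nonneg (pow_nonneg (sq_nonneg x) 2) (sq_nonneg (u + 1))]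
    have hu : u ^ 2 ≤ 6 * y ^ 4 := by nlinarith [pow_nonneg (sq_nonneg y) 2]
    have hy : 0 < y ^ 2 := by positivity [right_ne_zero_of_mul hneg.ne]
    nlinarith [pow_nonneg hy.le 3]
  · have hy : y = 0 := by simpa [hzero] using hyu
    have hx : x = 0 := by simpa [hy, hzero] using h
    simp [hx, hy]
  · have hu : u ≤ y ^ 4 := by nlinarith
    have hy : 0 < y ^ 2 := by positivity [right_ne_zero_of_mul hpos.ne']
    nlinarith [pow_nonneg hy.le 3]

theorem sq_norm_le_of_mem_MilnorEx_zero {p : EuclideanSpace ℝ (Fin 2)} (hp : p ∈ MilnorEx 0) :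
    ‖p‖ ^ 2 ≤ 7 + 48 * fEx p ^ 6 := by
  rw [mem_MilnorEx_iff] at hp
  have hx := sq_le_of_milnor_zero_relation (by simpa using hp)
  have hf : 9 * p 1 ^ 2 ≤ 16 * fEx p ^ 2 := by
    have hfactor : fEx p = p 1 * ((p 0 * p 1 + 3 / 2) ^ 2 + 3 / 4) := by unfold fEx; ring
    have hs : 3 / 4 ≤ (p 0 * p 1 + 3 / 2) ^ 2 + 3 / 4 := le_add_of_nonneg_left (sq_nonneg _)
    rw [hfactor, mul_pow]
    nlinarith [mul_le_mul_of_nonneg_left (pow_le_pow_left₀ (by norm_num) hs 2) (sq_nonneg (p 1))]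
  rw [EuclideanSpace.real_norm_sq_eq, Fin.sum_univ_two]
  nlinarith [pow_le_pow_left₀ (by positivity) hf 3, sq_nonneg (p 1 ^ 2 - 1)]

theorem SaEx_zero_eq_empty : SaEx 0 = ∅ := by
  refine eq_empty_of_forall_notMem fun c ⟨x, hM, hnorm, hf⟩ => ?_
  have hbound : Tendsto (fun j => 7 + 48 * fEx (x j) ^ 6) atTop atTop :=
    tendsto_atTop_mono (fun j => sq_norm_le_of_mem_MilnorEx_zero (hM j))
      ((tendsto_pow_atTop two_ne_zero).comp hnorm)
  exact not_tendsto_atTop_of_tendsto_nhds (((hf.pow 6).const_mul 48).const_add 7) hbound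

theorem exists_root_milnor_zero_one {y : ℝ} (hy0 : 0 < y) (hy : y ≤ 1 / 2) :
    ∃ u ∈ Icc (-1 : ℝ) (-1 / 2), y ^ 3 * (2 * u + 3) * (y - 1) = 3 * u * (u + 1) ^ 2 := by
  have hcont : ContinuousOn (fun u : ℝ => 3 * u * (u + 1) ^ 2 - y ^ 3 * (2 * u + 3) * (y - 1))
      (Icc (-1) (-1 / 2)) := by fun_prop
  have hy3 : y ^ 3 ≤ 1 / 8 := by
    calc y ^ 3 ≤ (1 / 2) ^ 3 := by gcongr
      _ = 1 / 8 := by norm_num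
  obtain ⟨u, hu, hroot⟩ := intermediate_value_Icc' (by norm_num) hcont
    (show (0 : ℝ) ∈ Icc _ _ from ⟨by nlinarith [pow_pos hy0 3], by nlinarith [pow_pos hy0 3]⟩)
  exact ⟨u, hu, by linarith [hroot]⟩

theorem exists_mem_MilnorEx_zero_one {R : ℝ} (hR : 1 ≤ R) :
    ∃ p ∈ MilnorEx !₂[0, 1], R ≤ ‖p‖ ∧ |fEx p| ≤ 1 / R := by
  obtain ⟨u, ⟨hu1, hu2⟩, hroot⟩ :=
    exists_root_milnor_zero_one (y := 1 / (2 * R)) (by positivity) (by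
      rw [div_le_div_iff₀ (by positivity) (by norm_num)]; linarith)
  set y := 1 / (2 * R) with hy
  have hy0 : 0 < y := by positivity
  have hRy : R * y = 1 / 2 := by rw [hy]; field_simp
  have hfu : fEx !₂[u / y, y] = y * (u ^ 2 + 3 * u + 3) := by
    simp only [fEx, Matrix.cons_val_zero, Matrix.cons_val_one, Matrix.cons_val_fin_one]
    field_simp
  refine ⟨!₂[u / y, y], ?_, ?_, ?_⟩
  · rw [mem_MilnorEx_iff]
    simp only [Matrix.cons_val_zero, Matrix.cons_val_one, Matrix.cons_val_fin_one, sub_zero]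
    field_simp
    linear_combination hroot
  · calc R ≤ |u| / y := by
          rw [le_div_iff₀ hy0, abs_of_neg (by linarith)]
          linarith
      _ ≤ ‖(!₂[u / y, y] : EuclideanSpace ℝ (Fin 2))‖ := by
        simpa [abs_of_pos hy0] using
          PiLp.norm_apply_le (!₂[u / y, y] : EuclideanSpace ℝ (Fin 2)) 0
  · have hs : 0 < u ^ 2 + 3 * u + 3 := by nlinarith [sq_nonneg (u + 3 / 2)]
    rw [hfu, abs_of_pos (mul_pos hy0 hs), show 1 / R = y * 2 by rw [hy]; field_simp]
    gcongr
    nlinarith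

theorem zero_mem_SaEx_zero_one : (0 : ℝ) ∈ SaEx !₂[0, 1] := by
  choose p hpM hpnorm hpf using fun j : ℕ =>
    exists_mem_MilnorEx_zero_one (R := j + 1) (le_add_of_nonneg_left j.cast_nonneg)
  refine ⟨p, hpM, ?_, squeeze_zero_norm hpf tendsto_one_div_add_atTop_nhds_zero_nat⟩
  exact tendsto_atTop_mono (fun j => (le_add_of_nonneg_right zero_le_one).trans (hpnorm j))
    tendsto_natCast_atTop_atTop

/-- For `f(x,y) = y(x²y² + 3xy + 3)`, one has `S_{(0,1)}(f) ≠ ∅`; in particular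
`S_{(0,1)}(f) ≠ S_{(0,0)}(f)`, since `S_{(0,0)}(f) = ∅`. -/
theorem SaEx_zero_one_nonempty :
    (SaEx (!₂[0, 1] : EuclideanSpace ℝ (Fin 2))).Nonempty ∧
    SaEx (!₂[0, 1] : EuclideanSpace ℝ (Fin 2)) ≠ SaEx (0 : EuclideanSpace ℝ (Fin 2)) := by
  have hne : (SaEx (!₂[0, 1] : EuclideanSpace ℝ (Fin 2))).Nonempty := ⟨0, zero_mem_SaEx_zero_one⟩
  exact ⟨hne, SaEx_zero_eq_empty ▸ hne.ne_empty⟩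
end
end

section
/- Let f : ℝ² → ℝ, f(x,y) = x + x²y. Then f has no critical points (Sing f = ∅), yet f is not a locally trivial fibration over any neighborhood of 0: the value 0 is a bifurcation value at infinity of f. Concretely, for t ≠ 0 the fiber f⁻¹(t) has a different number of connected components than f⁻¹(0). -/
/-!
The partial derivatives `∂f/∂x = 1 + 2 x y` and `∂f/∂y = x²` never vanish together.
Since `f = x (1 + x y)`, over `x ≠ 0` the fiber `f⁻¹(t)` is the graph of `x ↦ (t - x) / x²`,
split by the sign of `x` into two connected branches, while over `x = 0` it is the whole line
if `t = 0` and empty otherwise. On `f⁻¹(0)` that line is relatively open, being where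
`x y ≠ -1`. So on every fiber the sign of `x` is locally constant with connected level sets,
and the fiber has as many components as the sign takes values: three for `t = 0`, two otherwise.
-/

open Filter Topology Set

noncomputable section

def fBroughton (p : ℝ × ℝ) : ℝ := p.1 + p.1 ^ 2 * p.2

theorem IsLocallyConstant.natCard_connectedComponents {X ι : Type*} [TopologicalSpace X]
    {g : X → ι} (hg : IsLocallyConstant g) (hconn : ∀ i, IsPreconnected (g ⁻¹' {i})) :
    Nat.card (ConnectedComponents X) = Nat.card (range g) := by
  refine Nat.card_congr <| .ofBijective
    (Quotient.lift (rangeFactorization g) fun x y hxy ↦ ?_)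
    ⟨fun a b hab ↦ ?_, fun ⟨_, x, rfl⟩ ↦ ⟨ConnectedComponents.mk x, rfl⟩⟩
  · exact Subtype.ext <| hg.apply_eq_of_isPreconnected isPreconnected_connectedComponent
      mem_connectedComponent ((hxy : connectedComponent x = _) ▸ mem_connectedComponent)
  · obtain ⟨x, rfl⟩ := ConnectedComponents.surjective_coe a
    obtain ⟨y, rfl⟩ := ConnectedComponents.surjective_coe b
    have hxy : g x = g y := congrArg Subtype.val hab
    exact ConnectedComponents.coe_eq_coe'.mpr <|
      (hconn (g y)).subset_connectedComponent rfl hxy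

theorem isPreconnected_setOf_sign_eq {α : Type*} [ConditionallyCompleteLinearOrder α]
    [TopologicalSpace α] [OrderTopology α] [DenselyOrdered α] [Zero α] (s : SignType) :
    IsPreconnected {x : α | SignType.sign x = s} := by
  rcases s with _ | _ | _
  · simpa [SignType.zero_eq_zero, sign_eq_zero_iff] using isPreconnected_singleton
  · simp only [SignType.neg_eq_neg_one, sign_eq_neg_one_iff]
    exact isPreconnected_Iio
  · simp only [SignType.pos_eq_one, sign_eq_one_iff]
    exact isPreconnected_Ioi

theorem hasFDerivAt_fBroughton (p : ℝ × ℝ) :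
    HasFDerivAt fBroughton ((1 + 2 * p.1 * p.2) • ContinuousLinearMap.fst ℝ ℝ ℝ +
      p.1 ^ 2 • ContinuousLinearMap.snd ℝ ℝ ℝ) p := by
  have hx : HasFDerivAt (fun q : ℝ × ℝ ↦ q.1) (ContinuousLinearMap.fst ℝ ℝ ℝ) p :=
    hasFDerivAt_fst
  have hy : HasFDerivAt (fun q : ℝ × ℝ ↦ q.2) (ContinuousLinearMap.snd ℝ ℝ ℝ) p :=
    hasFDerivAt_snd
  refine (hx.add ((hx.pow 2).mul hy)).congr_fderiv ?_
  ext <;> simp [mul_comm]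

theorem fderiv_fBroughton_ne_zero (p : ℝ × ℝ) : fderiv ℝ fBroughton p ≠ 0 := by
  intro h
  rw [(hasFDerivAt_fBroughton p).fderiv] at h
  have hx : p.1 = 0 := by simpa using DFunLike.congr_fun h (0, 1)
  simpa [hx] using DFunLike.congr_fun h (1, 0)

def fiberParam (t x : ℝ) : ℝ × ℝ := (x, (t - x) / x ^ 2)

theorem fBroughton_fiberParam (t : ℝ) {x : ℝ} (hx : x ≠ 0) :
    fBroughton (fiberParam t x) = t := by
  simp only [fBroughton, fiberParam]
  field_simp
  ring

theorem eq_fiberParam_of_fBroughton_eq {t : ℝ} {p : ℝ × ℝ} (hp : fBroughton p = t)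
    (hx : p.1 ≠ 0) : p = fiberParam t p.1 := by
  refine Prod.ext rfl ?_
  rw [fiberParam, eq_div_iff (pow_ne_zero 2 hx), ← hp, fBroughton]
  ring

theorem fst_eq_zero_iff_of_fBroughton_eq {t : ℝ} {p : ℝ × ℝ} (hp : fBroughton p = t) :
    p.1 = 0 ↔ t = 0 ∧ p.1 * p.2 ≠ -1 := by
  have hfactor : p.1 * (1 + p.1 * p.2) = t := by rw [← hp, fBroughton]; ring
  constructor
  · intro hx
    simp [← hfactor, hx]
  · rintro ⟨rfl, hxy⟩
    exact (mul_eq_zero.mp hfactor).resolve_right fun h ↦ hxy (by linarith)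

theorem isPreconnected_fiber_inter_sign (t : ℝ) (s : SignType) :
    IsPreconnected (fBroughton ⁻¹' {t} ∩ {p | SignType.sign p.1 = s}) := by
  by_cases hs : s = 0
  · subst hs
    have hline : fBroughton ⁻¹' {t} ∩ {p | SignType.sign p.1 = 0} =
        ({0} : Set ℝ) ×ˢ {_y | t = 0} := by
      ext ⟨x, y⟩
      simp only [mem_inter_iff, mem_preimage, mem_singleton_iff, mem_ofPred_eq,
        sign_eq_zero_iff, mem_prod]
      constructor
      · rintro ⟨hp, rfl⟩
        simp_all [fBroughton]
      · rintro ⟨rfl, rfl⟩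
        simp [fBroughton]
    rw [hline]
    refine isPreconnected_singleton.prod ?_
    by_cases ht : t = 0 <;> simp [ht, isPreconnected_univ, isPreconnected_empty]
  · have hne : ∀ x : ℝ, SignType.sign x = s → x ≠ 0 := fun x hx h0 ↦ hs (by simp [← hx, h0])
    have hbranch : fBroughton ⁻¹' {t} ∩ {p | SignType.sign p.1 = s} =
        fiberParam t '' {x | SignType.sign x = s} := by
      ext p
      constructor
      · rintro ⟨hp, hsign⟩
        exact ⟨p.1, hsign, (eq_fiberParam_of_fBroughton_eq hp (hne _ hsign)).symm⟩
      · rintro ⟨x, hx, rfl⟩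
        exact ⟨fBroughton_fiberParam t (hne x hx), hx⟩
    rw [hbranch]
    refine (isPreconnected_setOf_sign_eq s).image _ ?_
    exact continuousOn_id.prodMk <| (continuousOn_const.sub continuousOn_id).div
      (continuousOn_id.pow 2) fun x hx ↦ pow_ne_zero 2 (hne x hx)

theorem isLocallyConstant_sign_fst_fiber (t : ℝ) :
    IsLocallyConstant fun p : fBroughton ⁻¹' {t} ↦ SignType.sign p.1.1 := by
  refine IsLocallyConstant.iff_isOpen_fiber.mpr fun s ↦ ?_
  rcases s with _ | _ | _
  · have hline : (fun p : fBroughton ⁻¹' {t} ↦ SignType.sign p.1.1) ⁻¹' {SignType.zero} =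
        {_p | t = 0} ∩ {p | p.1.1 * p.1.2 ≠ -1} := by
      ext p
      simp only [mem_preimage, mem_singleton_iff, SignType.zero_eq_zero, sign_eq_zero_iff]
      exact fst_eq_zero_iff_of_fBroughton_eq p.2
    rw [hline]
    exact isOpen_const.inter (isOpen_ne_fun (by fun_prop) continuous_const)
  · simp only [preimage, mem_singleton_iff, SignType.neg_eq_neg_one, sign_eq_neg_one_iff]
    exact isOpen_lt (by fun_prop) continuous_const
  · simp only [preimage, mem_singleton_iff, SignType.pos_eq_one, sign_eq_one_iff]
    exact isOpen_lt continuous_const (by fun_prop)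

theorem range_sign_fst_fiber (t : ℝ) :
    range (fun p : fBroughton ⁻¹' {t} ↦ SignType.sign p.1.1) = {s | s ≠ 0 ∨ t = 0} := by
  ext s
  constructor
  · rintro ⟨p, rfl⟩
    refine or_iff_not_imp_left.mpr fun h ↦ ?_
    exact ((fst_eq_zero_iff_of_fBroughton_eq p.2).mp (sign_eq_zero_iff.mp (not_not.mp h))).1
  · intro hs
    rcases s with _ | _ | _
    · have ht : t = 0 := hs.resolve_left (by simp)
      exact ⟨⟨(0, 0), by simp [fBroughton, ht]⟩, by simp⟩
    · exact ⟨⟨fiberParam t (-1), fBroughton_fiberParam t (by norm_num)⟩, by simp [fiberParam]⟩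
    · exact ⟨⟨fiberParam t 1, fBroughton_fiberParam t (by norm_num)⟩, by simp [fiberParam]⟩

theorem natCard_connectedComponents_fiber (t : ℝ) :
    Nat.card (ConnectedComponents (fBroughton ⁻¹' {t})) =
      Nat.card {s : SignType | s ≠ 0 ∨ t = 0} := by
  rw [(isLocallyConstant_sign_fst_fiber t).natCard_connectedComponents fun s ↦ ?_,
    range_sign_fst_fiber]
  have h := isPreconnected_fiber_inter_sign t s
  rwa [← Subtype.image_preimage_coe, Topology.IsInducing.subtypeVal.isPreconnected_image] at h

/-- For `f(x,y) = x + x²y`: `f` has no critical points (`Sing f = ∅`), yet `0` is a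
bifurcation value at infinity: concretely, `f⁻¹(0)` has `3` connected components while
`f⁻¹(t)` has `2` connected components for every `t ≠ 0`, so `f` is not a locally trivial
fibration over any neighborhood of `0`. -/
theorem broughton_example :
    (∀ p : ℝ × ℝ, fderiv ℝ fBroughton p ≠ 0) ∧
    Nat.card (ConnectedComponents (fBroughton ⁻¹' {(0 : ℝ)})) = 3 ∧
    (∀ t : ℝ, t ≠ 0 → Nat.card (ConnectedComponents (fBroughton ⁻¹' {t})) = 2) := by
  refine ⟨fderiv_fBroughton_ne_zero, ?_, fun t ht ↦ ?_⟩ <;> rw [natCard_connectedComponents_fiber]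
  · simp only [or_true, ofPred_true, Nat.card_eq_fintype_card]
    rfl
  · simp only [ht, or_false, Nat.card_eq_fintype_card]
    rfl
end
end
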